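/- Let T > 0, let H : ℝ → Matrix (Fin d) (Fin d) ℝ be continuous on [0,T] with each H(τ) symmetric, and let f : ℝ → ℝ^d be continuous on [0,T]. Suppose v : ℝ → ℝ^d solves the forward sensitivity equation v'(τ) = −H(τ).mulVec v(τ) + f(τ) on [0,T] with v(0) = 0, and p : ℝ → ℝ^d solves the backward sensitivity equation p'(τ) = H(τ).mulVec p(τ) on [0,T]. Then ⟨p(T), v(T)⟩ = ∫_{0}^{T} ⟨p(τ), f(τ)⟩ dτ, where ⟨·,·⟩ is the Euclidean inner product on ℝ^d. -/

import Mathlib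

open MeasureTheory Matrix

/-!
Since `H(τ)` is symmetric, `⟨H p, v⟩ = ⟨p, H v⟩`, so the `H`-terms cancel in the product rule and
`τ ↦ ⟨p(τ), v(τ)⟩` has derivative `⟨p(τ), f(τ)⟩`. The fundamental theorem of calculus and
`v(0) = 0` then give the identity.
-/

theorem Matrix.IsSymm.mulVec_dotProduct {n R : Type*} [Fintype n] [CommSemiring R]
    {A : Matrix n n R} (hA : A.IsSymm) (x y : n → R) :
    A *ᵥ x ⬝ᵥ y = x ⬝ᵥ A *ᵥ y := by
  rw [dotProduct_mulVec, ← mulVec_transpose, hA.eq, dotProduct_comm]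

theorem HasDerivAt.dotProduct {ι 𝕜 : Type*} [Fintype ι] [NontriviallyNormedField 𝕜]
    {x y : 𝕜 → ι → 𝕜} {x' y' : ι → 𝕜} {t : 𝕜}
    (hx : HasDerivAt x x' t) (hy : HasDerivAt y y' t) :
    HasDerivAt (fun s => x s ⬝ᵥ y s) (x' ⬝ᵥ y t + x t ⬝ᵥ y') t := by
  simp only [_root_.dotProduct, ← Finset.sum_add_distrib]
  exact HasDerivAt.fun_sum fun i _ => (hasDerivAt_pi.1 hx i).mul (hasDerivAt_pi.1 hy i)

theorem hasDerivAt_dotProduct_of_adjoint {ι : Type*} [Fintype ι]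
    {p v : ℝ → ι → ℝ} {A : Matrix ι ι ℝ} {g : ι → ℝ} {t : ℝ} (hA : A.IsSymm)
    (hp : HasDerivAt p (A *ᵥ p t) t) (hv : HasDerivAt v (-(A *ᵥ v t) + g) t) :
    HasDerivAt (fun s => p s ⬝ᵥ v s) (p t ⬝ᵥ g) t := by
  refine (hp.dotProduct hv).congr_deriv ?_
  rw [hA.mulVec_dotProduct, dotProduct_add, dotProduct_neg, add_neg_cancel_left]

theorem adjoint_pairing_identity_general {d : ℕ} (T : ℝ) (hT : 0 < T)
    (H : ℝ → Matrix (Fin d) (Fin d) ℝ)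
    (hHsymm : ∀ τ ∈ Set.Icc (0 : ℝ) T, (H τ).IsSymm)
    (f : ℝ → Fin d → ℝ)
    (hf : ∀ i, ContinuousOn (fun τ => f τ i) (Set.Icc 0 T))
    (v p : ℝ → Fin d → ℝ)
    (hv : ∀ τ ∈ Set.Icc (0 : ℝ) T, HasDerivAt v (-(H τ).mulVec (v τ) + f τ) τ)
    (hv0 : v 0 = 0)
    (hp : ∀ τ ∈ Set.Icc (0 : ℝ) T, HasDerivAt p ((H τ).mulVec (p τ)) τ) :
    p T ⬝ᵥ v T = ∫ τ in (0 : ℝ)..T, p τ ⬝ᵥ f τ := by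
  rw [← Set.uIcc_of_le hT.le] at hHsymm hf hv hp
  have hpf : ContinuousOn (fun τ => p τ ⬝ᵥ f τ) (Set.uIcc 0 T) :=
    (continuous_fst.dotProduct continuous_snd).comp_continuousOn
      ((HasDerivAt.continuousOn hp).prodMk (continuousOn_pi.2 hf))
  rw [intervalIntegral.integral_eq_sub_of_hasDerivAt
    (fun τ hτ => hasDerivAt_dotProduct_of_adjoint (hHsymm τ hτ) (hp τ hτ) (hv τ hτ))
    hpf.intervalIntegrable, hv0, dotProduct_zero, sub_zero]

/-- **Adjoint pairing identity of one-run reweighting sensitivity.** If `v` solves the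
forward sensitivity equation `v' = −H(τ) v + f(τ)` with `v(0) = 0` and `p` solves the
backward sensitivity equation `p' = H(τ) p`, where each `H(τ)` is symmetric, then
`⟨p(T), v(T)⟩ = ∫_0^T ⟨p(τ), f(τ)⟩ dτ`. -/
theorem adjoint_pairing_identity {d : ℕ} (T : ℝ) (hT : 0 < T)
    (H : ℝ → Matrix (Fin d) (Fin d) ℝ)
    (hHcont : ∀ i j, ContinuousOn (fun τ => H τ i j) (Set.Icc 0 T))
    (hHsymm : ∀ τ ∈ Set.Icc (0 : ℝ) T, (H τ).IsSymm)
    (f : ℝ → Fin d → ℝ)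
    (hf : ∀ i, ContinuousOn (fun τ => f τ i) (Set.Icc 0 T))
    (v p : ℝ → Fin d → ℝ)
    (hv : ∀ τ ∈ Set.Icc (0 : ℝ) T, HasDerivAt v (-(H τ).mulVec (v τ) + f τ) τ)
    (hv0 : v 0 = 0)
    (hp : ∀ τ ∈ Set.Icc (0 : ℝ) T, HasDerivAt p ((H τ).mulVec (p τ)) τ) :
    p T ⬝ᵥ v T = ∫ τ in (0 : ℝ)..T, p τ ⬝ᵥ f τ :=
  adjoint_pairing_identity_general T hT H hHsymm f hf v p hv hv0 hp
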